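/- For every integer n ≥ 4, L(n) = L(n−1) or L(n) = L(n+1); equivalently, L(n+1) ≤ L(n−1) + 1 for n ≥ 4. -/

import Mathlib

/-!
Clearing denominators, `L n` is the least `k > 0` with `2 ^ n < n * C(n, k)`, and `L n ≤ n / 2`
because the central coefficient already qualifies. Two ratio estimates on binomial coefficients
drive the argument. From `C(m + 1, k) = C(m, k) (m + 1) / (m + 1 - k)` one gets that `L` is
nondecreasing; from `C(m + 2, k + 1) = C(m, k) (m + 1) (m + 2) / ((k + 1) (m + 1 - k))` and AM-GM,
`(k + 1) (m + 1 - k) ≤ (m + 2) ^ 2 / 4`, one gets `L (m + 2) ≤ L m + 1`. Hence `L (n + 1)` and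
`L (n - 1)` differ by at most one, and `L n` equals one of them.
-/

noncomputable def L (n : ℕ) : ℕ :=
  sInf {k : ℕ | 0 < k ∧ (n.choose k : ℝ) > 2 ^ n / n}

theorem two_pow_lt_mul_choose_half {n : ℕ} (hn : 3 ≤ n) : 2 ^ n < n * n.choose (n / 2) := by
  have hmiddle : n ≤ n.choose (n / 2) := by
    simpa only [Nat.choose_one_right] using Nat.choose_le_middle 1 n
  obtain ⟨m, rfl⟩ : ∃ m, n = m + 2 := ⟨n - 2, by omega⟩
  have hinner : ∑ i ∈ Finset.range (m + 1), (m + 2).choose (i + 1)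
      ≤ (m + 1) * (m + 2).choose ((m + 2) / 2) := by
    simpa only [Finset.sum_const, Finset.card_range, smul_eq_mul] using
      Finset.sum_le_sum fun i (_ : i ∈ Finset.range (m + 1)) => Nat.choose_le_middle (i + 1) (m + 2)
  have hsum : 2 ^ (m + 2) ≤ 2 + (m + 1) * (m + 2).choose ((m + 2) / 2) := by
    rw [← Nat.sum_range_choose, Finset.sum_range_succ, Finset.sum_range_succ']
    simp only [Nat.choose_zero_right, Nat.choose_self]
    omega
  nlinarith

theorem two_pow_lt_mul_choose_of_succ {m k : ℕ} (hk : 2 * k + 1 ≤ m)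
    (h : 2 ^ (m + 1) < (m + 1) * (m + 1).choose k) : 2 ^ m < m * m.choose k := by
  have hratio := Nat.choose_mul_succ_eq m k
  set d := m + 1 - k
  have hd : (m + 1) ^ 2 ≤ 2 * m * d := by
    have : m + 3 ≤ 2 * d := by omega
    nlinarith
  refine lt_of_mul_lt_mul_right (a := (m + 1) ^ 2) ?_ (Nat.zero_le _)
  calc 2 ^ m * (m + 1) ^ 2 ≤ 2 ^ m * (2 * m * d) := Nat.mul_le_mul_left _ hd
    _ = m * (2 ^ (m + 1) * d) := by ring
    _ < m * ((m + 1) * (m + 1).choose k * d) := by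
        gcongr <;> omega
    _ = m * m.choose k * (m + 1) ^ 2 := by rw [mul_assoc _ _ d, ← hratio]; ring

theorem two_pow_lt_mul_choose_add_two {m k : ℕ} (h : 2 ^ m < m * m.choose k) :
    2 ^ (m + 2) < (m + 2) * (m + 2).choose (k + 1) := by
  have hk : k ≤ m := by
    by_contra! hk
    simp [Nat.choose_eq_zero_of_lt hk] at h
  set d := m + 1 - k
  have hratio : (m + 2).choose (k + 1) * ((k + 1) * d) = (m + 1) * (m + 2) * m.choose k := by
    have h₁ := Nat.add_one_mul_choose_eq m k
    have h₂ : (m + 1).choose (k + 1) * (m + 2) = (m + 2).choose (k + 1) * d := by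
      have := Nat.choose_mul_succ_eq (m + 1) (k + 1)
      rwa [show m + 1 + 1 - (k + 1) = d by omega] at this
    calc (m + 2).choose (k + 1) * ((k + 1) * d)
        = (m + 1).choose (k + 1) * (m + 2) * (k + 1) := by rw [h₂]; ring
      _ = (m + 1) * (m + 2) * m.choose k := by rw [mul_right_comm, ← h₁]; ring
  have hamgm : 4 * ((k + 1) * d) ≤ (m + 2) ^ 2 := by
    have := four_mul_le_sq_add (k + 1) d
    rwa [show k + 1 + d = m + 2 by omega, mul_assoc] at this
  refine lt_of_mul_lt_mul_right (a := m * ((k + 1) * d)) ?_ (Nat.zero_le _)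
  calc 2 ^ (m + 2) * (m * ((k + 1) * d)) = m * 2 ^ m * (4 * ((k + 1) * d)) := by ring
    _ ≤ (m + 1) * 2 ^ m * (m + 2) ^ 2 := by gcongr; omega
    _ < (m + 1) * (m * m.choose k) * (m + 2) ^ 2 := by gcongr
    _ = (m + 2) * m * ((m + 2).choose (k + 1) * ((k + 1) * d)) := by rw [hratio]; ring
    _ = (m + 2) * (m + 2).choose (k + 1) * (m * ((k + 1) * d)) := by ring

theorem L_eq_sInf {n : ℕ} (hn : 0 < n) :
    L n = sInf {k : ℕ | 0 < k ∧ 2 ^ n < n * n.choose k} := by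
  unfold L
  congr! 4 with k
  rw [gt_iff_lt, div_lt_iff₀ (by exact_mod_cast hn), mul_comm]
  norm_cast

theorem L_le_of_two_pow_lt {n k : ℕ} (hk : 0 < k) (h : 2 ^ n < n * n.choose k) : L n ≤ k := by
  have hn : 0 < n := Nat.pos_of_ne_zero fun h0 => by simp [h0] at h
  rw [L_eq_sInf hn]
  exact Nat.sInf_le ⟨hk, h⟩

theorem L_spec {n : ℕ} (hn : 3 ≤ n) : 0 < L n ∧ 2 ^ n < n * n.choose (L n) ∧ L n ≤ n / 2 := by
  have hhalf : n / 2 ∈ {k : ℕ | 0 < k ∧ 2 ^ n < n * n.choose k} :=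
    ⟨by omega, two_pow_lt_mul_choose_half hn⟩
  obtain ⟨hpos, hlt⟩ := L_eq_sInf (n := n) (by omega) ▸ Nat.sInf_mem ⟨_, hhalf⟩
  exact ⟨hpos, hlt, L_le_of_two_pow_lt hhalf.1 hhalf.2⟩

theorem L_le_L_succ {m : ℕ} (hm : 3 ≤ m) : L m ≤ L (m + 1) := by
  obtain ⟨hpos, hlt, hhalf⟩ := L_spec (n := m + 1) (by omega)
  refine L_le_of_two_pow_lt hpos ?_
  by_cases hk : 2 * L (m + 1) + 1 ≤ m
  · exact two_pow_lt_mul_choose_of_succ hk hlt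
  · have hcentral : m.choose (L (m + 1)) = m.choose (m / 2) := by
      rcases Nat.even_or_odd m with ⟨j, hj⟩ | ⟨j, hj⟩
      · congr 1; omega
      · rw [show L (m + 1) = m - j by omega, Nat.choose_symm (by omega)]
        congr 1; omega
    rw [hcentral]
    exact two_pow_lt_mul_choose_half hm

theorem L_add_two_le {m : ℕ} (hm : 3 ≤ m) : L (m + 2) ≤ L m + 1 :=
  have ⟨_, hlt, _⟩ := L_spec hm
  L_le_of_two_pow_lt (Nat.succ_pos _) (two_pow_lt_mul_choose_add_two hlt)

theorem L_eq_pred_or_succ (n : ℕ) (hn : 4 ≤ n) :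
    (L n = L (n - 1) ∨ L n = L (n + 1)) ∧ L (n + 1) ≤ L (n - 1) + 1 := by
  obtain ⟨m, rfl⟩ : ∃ m, n = m + 1 := ⟨n - 1, by omega⟩
  have h₁ : L m ≤ L (m + 1) := L_le_L_succ (by omega)
  have h₂ : L (m + 1) ≤ L (m + 1 + 1) := L_le_L_succ (by omega)
  have h₃ : L (m + 1 + 1) ≤ L m + 1 := L_add_two_le (by omega)
  simp only [Nat.add_sub_cancel]
  omega
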